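/- There exists a function F̃ : (−1,1) × ℝ → ℝ that is real analytic (jointly in both variables) such that: (1) for all w ∈ (−1,1) with w ≠ 0 and all u ≠ 0, F̃(w,u) = w·( u/(1 − ((1−w)/(1+w))^u) − u/2 ); (2) F̃(−w,u) = F̃(w,u) for all (w,u), i.e. F̃ is even in w; and (3) F̃(w,−u) = F̃(w,u) for all (w,u), i.e. F̃ is even in u. -/

import Mathlib

/-!
Since `((1 - w) / (1 + w)) ^ u = exp (-2 u artanh w)`, the expression equals
`(u / 2) · w · coth (u artanh w) = (w / artanh w) · (s coth s) / 2` with `s = u artanh w`.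
Both `w / artanh w` and `s coth s` are even and have removable singularities at `0`; writing
them with `dslope` (the difference quotient at `0`, extended by the derivative) makes them
visibly analytic.
-/

open Real Filter Topology Set

section DSlope

variable {𝕜 E : Type*} [NontriviallyNormedField 𝕜] [NormedAddCommGroup E] [NormedSpace 𝕜 E]

theorem AnalyticAt.dslope {f : 𝕜 → E} {a x : 𝕜} (hf : AnalyticAt 𝕜 f x) :
    AnalyticAt 𝕜 (dslope f a) x := by
  rcases eq_or_ne x a with rfl | hxa
  · obtain ⟨p, hp⟩ := hf
    exact ⟨p.fslope, hp.has_fpower_series_dslope_fslope⟩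
  · have hslope : AnalyticAt 𝕜 (fun y => (y - a)⁻¹ • (f y - f a)) x :=
      ((analyticAt_id.sub analyticAt_const).inv (sub_ne_zero.2 hxa)).smul
        (hf.sub analyticAt_const)
    refine hslope.congr ?_
    filter_upwards [eventually_ne_nhds hxa] with y hy
    rw [dslope_of_ne _ hy, slope_def_module]

theorem dslope_zero_neg_of_odd [IsAddTorsionFree E] {f : 𝕜 → E} (hf : ∀ x, f (-x) = -f x)
    (x : 𝕜) : dslope f 0 (-x) = dslope f 0 x := by
  rcases eq_or_ne x 0 with rfl | hx
  · rw [neg_zero]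
  have hf0 : f 0 = 0 := self_eq_neg.1 (by simpa using hf 0)
  rw [dslope_of_ne _ hx, dslope_of_ne _ (neg_ne_zero.2 hx), slope_def_module, slope_def_module,
    hf, hf0, sub_zero, sub_zero, sub_zero, sub_zero, inv_neg, neg_smul_neg]

theorem dslope_zero_eq_div {f : 𝕜 → 𝕜} (hf : f 0 = 0) {x : 𝕜} (hx : x ≠ 0) :
    dslope f 0 x = f x / x := by
  rw [dslope_of_ne _ hx, slope_def_field, hf, sub_zero, sub_zero]

end DSlope

noncomputable def mulCoth (s : ℝ) : ℝ := cosh s / dslope sinh 0 s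

theorem dslope_sinh_ne_zero (s : ℝ) : dslope sinh 0 s ≠ 0 := by
  rcases eq_or_ne s 0 with rfl | hs
  · simp [dslope_same]
  · rw [dslope_zero_eq_div sinh_zero hs]
    exact div_ne_zero (sinh_ne_zero.2 hs) hs

theorem mulCoth_of_ne_zero {s : ℝ} (hs : s ≠ 0) : mulCoth s = s * cosh s / sinh s := by
  rw [mulCoth, dslope_zero_eq_div sinh_zero hs, div_div_eq_mul_div, mul_comm]

theorem mulCoth_neg (s : ℝ) : mulCoth (-s) = mulCoth s := by
  rw [mulCoth, mulCoth, cosh_neg, dslope_zero_neg_of_odd sinh_neg]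

theorem analyticAt_mulCoth (s : ℝ) : AnalyticAt ℝ mulCoth s :=
  analyticAt_cosh.div analyticAt_sinh.dslope (dslope_sinh_ne_zero s)

theorem artanh_neg_eq_neg_artanh (x : ℝ) : artanh (-x) = -artanh x := by
  rw [artanh, artanh, ← log_inv, ← sqrt_inv, inv_div, sub_neg_eq_add, ← sub_eq_add_neg]

theorem artanh_eq_half_log_sub {x : ℝ} (hx : x ∈ Ioo (-1) 1) :
    artanh x = (log (1 + x) - log (1 - x)) / 2 := by
  rw [artanh_eq_half_log (Ioo_subset_Icc_self hx),
    log_div (by linarith [hx.1]) (by linarith [hx.2])]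
  ring

theorem artanh_eventuallyEq {x : ℝ} (hx : x ∈ Ioo (-1) 1) :
    artanh =ᶠ[𝓝 x] fun y => (log (1 + y) - log (1 - y)) / 2 := by
  filter_upwards [isOpen_Ioo.mem_nhds hx] with y hy using artanh_eq_half_log_sub hy

theorem analyticAt_artanh {x : ℝ} (hx : x ∈ Ioo (-1) 1) : AnalyticAt ℝ artanh x := by
  have h : AnalyticAt ℝ (fun y => (log (1 + y) - log (1 - y)) / 2) x :=
    (((analyticAt_const.add analyticAt_id).log (by simp; linarith [hx.1])).sub
      ((analyticAt_const.sub analyticAt_id).log (by simp; linarith [hx.2]))).div_const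
  exact h.congr (artanh_eventuallyEq hx).symm

theorem hasDerivAt_artanh {x : ℝ} (hx : x ∈ Ioo (-1) 1) :
    HasDerivAt artanh (1 - x ^ 2)⁻¹ x := by
  have h1 : 0 < 1 + x := by linarith [hx.1]
  have h2 : 0 < 1 - x := by linarith [hx.2]
  have h := ((((hasDerivAt_id x).const_add 1).log h1.ne').sub
    (((hasDerivAt_id x).const_sub 1).log h2.ne')).div_const 2
  refine (h.congr_deriv ?_).congr_of_eventuallyEq (artanh_eventuallyEq hx)
  rw [show (1 : ℝ) - x ^ 2 = (1 + x) * (1 - x) by ring]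
  simp only [id]
  field_simp
  ring

theorem artanh_ne_zero {x : ℝ} (hx : x ∈ Ioo (-1) 1) (h0 : x ≠ 0) : artanh x ≠ 0 := by
  rw [Ne, artanh_eq_zero_iff, not_or, not_or, not_le, not_le]
  exact ⟨hx.1, h0, hx.2⟩

theorem dslope_artanh_ne_zero {x : ℝ} (hx : x ∈ Ioo (-1) 1) : dslope artanh 0 x ≠ 0 := by
  rcases eq_or_ne x 0 with rfl | h0
  · rw [dslope_same, (hasDerivAt_artanh hx).deriv]; norm_num
  · rw [dslope_zero_eq_div artanh_zero h0]
    exact div_ne_zero (artanh_ne_zero hx h0) h0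

theorem rpow_eq_exp_artanh {w : ℝ} (hw : w ∈ Ioo (-1) 1) (u : ℝ) :
    ((1 - w) / (1 + w)) ^ u = exp (-2 * (u * artanh w)) := by
  have h1 : 0 < 1 + w := by linarith [hw.1]
  have h2 : 0 < 1 - w := by linarith [hw.2]
  rw [rpow_def_of_pos (div_pos h2 h1), artanh_eq_half_log_sub hw, log_div h2.ne' h1.ne']
  ring_nf

theorem div_one_sub_exp_sub_half {s : ℝ} (hs : s ≠ 0) (u : ℝ) :
    u / (1 - exp (-2 * s)) - u / 2 = u * cosh s / (2 * sinh s) := by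
  have hsinh : exp s - exp (-s) ≠ 0 := by
    rw [sub_ne_zero, Ne, exp_eq_exp]
    exact fun h => hs (by linarith)
  have hexp : 1 - exp (-s) ^ 2 ≠ 0 := by
    rw [← exp_nat_mul, sub_ne_zero, ne_comm, Ne, exp_eq_one_iff]
    exact mul_ne_zero (by norm_num) (neg_ne_zero.2 hs)
  have hprod : exp s * exp (-s) = 1 := by rw [← exp_add, add_neg_cancel, exp_zero]
  have hsq : exp (-2 * s) = exp (-s) ^ 2 := by rw [← exp_nat_mul]; push_cast; ring_nf
  rw [cosh_eq, sinh_eq, hsq]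
  field_simp
  linear_combination 2 * u * exp (-s) * hprod

noncomputable def Ftilde (p : ℝ × ℝ) : ℝ :=
  mulCoth (p.2 * artanh p.1) / (2 * dslope artanh 0 p.1)

theorem analyticOnNhd_Ftilde :
    AnalyticOnNhd ℝ Ftilde {p : ℝ × ℝ | -1 < p.1 ∧ p.1 < 1} := by
  rintro p hp
  have hA : AnalyticAt ℝ (fun q : ℝ × ℝ => artanh q.1) p :=
    (analyticAt_artanh hp).comp analyticAt_fst
  exact ((analyticAt_mulCoth _).comp (analyticAt_snd.mul hA)).div
    (analyticAt_const.mul ((analyticAt_artanh hp).dslope.comp analyticAt_fst))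
    (mul_ne_zero two_ne_zero (dslope_artanh_ne_zero hp))

theorem Ftilde_eq {w u : ℝ} (hw : w ∈ Ioo (-1) 1) (hw0 : w ≠ 0) (hu : u ≠ 0) :
    Ftilde (w, u) = w * (u / (1 - ((1 - w) / (1 + w)) ^ u) - u / 2) := by
  have hA : artanh w ≠ 0 := artanh_ne_zero hw hw0
  have hs : u * artanh w ≠ 0 := mul_ne_zero hu hA
  rw [rpow_eq_exp_artanh hw, div_one_sub_exp_sub_half hs, Ftilde, mulCoth_of_ne_zero hs,
    dslope_zero_eq_div artanh_zero hw0]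
  field_simp

theorem Ftilde_neg_fst (w u : ℝ) : Ftilde (-w, u) = Ftilde (w, u) := by
  simp only [Ftilde, artanh_neg_eq_neg_artanh, mul_neg, mulCoth_neg,
    dslope_zero_neg_of_odd artanh_neg_eq_neg_artanh]

theorem Ftilde_neg_snd (w u : ℝ) : Ftilde (w, -u) = Ftilde (w, u) := by
  simp only [Ftilde, neg_mul, mulCoth_neg]

theorem statement_5 :
    ∃ F : ℝ × ℝ → ℝ,
      AnalyticOnNhd ℝ F {p : ℝ × ℝ | -1 < p.1 ∧ p.1 < 1} ∧
      (∀ w u : ℝ, -1 < w → w < 1 → w ≠ 0 → u ≠ 0 →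
        F (w, u) = w * (u / (1 - ((1 - w) / (1 + w)) ^ u) - u / 2)) ∧
      (∀ w u : ℝ, -1 < w → w < 1 → F (-w, u) = F (w, u)) ∧
      (∀ w u : ℝ, -1 < w → w < 1 → F (w, -u) = F (w, u)) :=
  ⟨Ftilde, analyticOnNhd_Ftilde, fun _ _ h1 h2 hw hu => Ftilde_eq ⟨h1, h2⟩ hw hu,
    fun w u _ _ => Ftilde_neg_fst w u, fun w u _ _ => Ftilde_neg_snd w u⟩
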